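/- Let H be a non-transitive subgroup of Sym_n and K a field. Then the semigroup algebra K[S_{n,l}(H)] contains a free subalgebra of rank at least 2, and hence has exponential growth. -/

import Mathlib

/-!
The orbit of each letter under `H` is preserved by the defining relations, so recording the
word of orbits of a word factors through `S_{n,l}(H)`. Two letters `x_i`, `x_j` from different
orbits therefore generate a free submonoid, whose monoid algebra is a free algebra of rank 2
inside `K[S_{n,l}(H)]`; its `2 ^ m` words of length `m` are distinct basis elements of the
monoid algebra lying in the span of the words of length at most `m`.
-/

/-- The rewriting relation for the permutation-relation monoid `S_{n,l}(H)`. -/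
def permRel (n l : ℕ) (H : Subgroup (Equiv.Perm (Fin n))) :
    FreeMonoid (Fin n) → FreeMonoid (Fin n) → Prop := fun a b =>
  ∃ σ ∈ H, ∃ w : Fin l → Fin n,
    a = FreeMonoid.ofList (List.ofFn fun i => w i) ∧
    b = FreeMonoid.ofList (List.ofFn fun i => σ (w i))

/-- The congruence on the free monoid generated by the permutation relations. -/
def permCon (n l : ℕ) (H : Subgroup (Equiv.Perm (Fin n))) : Con (FreeMonoid (Fin n)) :=
  conGen (permRel n l H)

/-- The monoid `S_{n,l}(H)`. -/
abbrev SM (n l : ℕ) (H : Subgroup (Equiv.Perm (Fin n))) := (permCon n l H).Quotient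

/-- The generator `x_i` of `S_{n,l}(H)`. -/
def xg (n l : ℕ) (H : Subgroup (Equiv.Perm (Fin n))) (i : Fin n) : SM n l H :=
  (permCon n l H).mk' (FreeMonoid.of i)

/-- The span of (the images in the monoid algebra of) all words of length at most `m`,
used to measure the growth of `K[S_{n,l}(H)]`. -/
noncomputable def spanV (K : Type) [Field K] (n l : ℕ) (H : Subgroup (Equiv.Perm (Fin n))) (m : ℕ) :
    Submodule K (MonoidAlgebra K (SM n l H)) :=
  Submodule.span K ((fun w : List (Fin n) =>
    (MonoidAlgebra.of K (SM n l H)) ((List.map (xg n l H) w).prod)) '' {w | w.length ≤ m})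

open Function MulAction

section MonoidAlgebra

variable {R M : Type*} [CommSemiring R] [Monoid M]

theorem exists_injective_algHom_freeAlgebra_of_injective {X : Type*} {g : FreeMonoid X →* M}
    (hg : Injective g) : ∃ f : FreeAlgebra R X →ₐ[R] MonoidAlgebra R M, Injective f :=
  ⟨(MonoidAlgebra.mapDomainAlgHom R R g).comp FreeAlgebra.equivMonoidAlgebraFreeMonoid.toAlgHom,
    (MonoidAlgebra.mapDomain_injective hg).comp FreeAlgebra.equivMonoidAlgebraFreeMonoid.injective⟩

theorem MonoidAlgebra.linearIndependent_of_injective {ι : Type*} {e : ι → M} (he : Injective e) :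
    LinearIndependent R fun t => MonoidAlgebra.of R M (e t) :=
  (MonoidAlgebra.basis M R).linearIndependent.comp e he

end MonoidAlgebra

variable {n l : ℕ} {H : Subgroup (Equiv.Perm (Fin n))}

theorem prod_map_xg (w : List (Fin n)) :
    (w.map (xg n l H)).prod = (permCon n l H).mk' (FreeMonoid.ofList w) := by
  induction w with
  | nil => rfl
  | cons a t ih => rw [List.map_cons, List.prod_cons, ih, FreeMonoid.ofList_cons, map_mul]; rfl

theorem permCon_le_ker_map_orbit :
    permCon n l H ≤ Con.ker (FreeMonoid.map (Quotient.mk (orbitRel H (Fin n)))) := by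
  refine Con.conGen_le.mpr ?_
  rintro _ _ ⟨σ, hσ, w, rfl, rfl⟩
  rw [Con.ker_rel, ← FreeMonoid.ofList_map, ← FreeMonoid.ofList_map, List.map_ofFn, List.map_ofFn]
  refine congrArg FreeMonoid.ofList (congrArg List.ofFn (funext fun k => ?_))
  exact (Quotient.sound (mem_orbit (w k) (⟨σ, hσ⟩ : H))).symm

def orbitWord (n l : ℕ) (H : Subgroup (Equiv.Perm (Fin n))) :
    SM n l H →* FreeMonoid (orbitRel.Quotient H (Fin n)) :=
  (permCon n l H).lift _ permCon_le_ker_map_orbit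

theorem injective_mk'_comp_map {ι : Type*} {c : ι → Fin n}
    (hc : Injective fun k => (Quotient.mk (orbitRel H (Fin n)) (c k))) :
    Injective ((permCon n l H).mk'.comp (FreeMonoid.map c)) := by
  have hcomp : (orbitWord n l H).comp ((permCon n l H).mk'.comp (FreeMonoid.map c)) =
      FreeMonoid.map fun k => Quotient.mk (orbitRel H (Fin n)) (c k) := by
    ext; rfl
  refine Injective.of_comp (f := orbitWord n l H) ?_
  rw [← MonoidHom.coe_comp, hcomp]
  intro x y hxy
  exact FreeMonoid.toList.injective (List.map_injective_iff.mpr hc (congrArg FreeMonoid.toList hxy))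

instance finiteDimensional_spanV (K : Type) [Field K] (m : ℕ) :
    FiniteDimensional K (spanV K n l H m) :=
  FiniteDimensional.span_of_finite K ((List.finite_length_le (Fin n) m).image _)

theorem card_pow_le_finrank_spanV (K : Type) [Field K] {ι : Type*} [Fintype ι] {c : ι → Fin n}
    (hc : Injective ((permCon n l H).mk'.comp (FreeMonoid.map c))) (m : ℕ) :
    Fintype.card ι ^ m ≤ Module.finrank K (spanV K n l H m) := by
  set word : (Fin m → ι) → SM n l H :=
    fun t => (permCon n l H).mk'.comp (FreeMonoid.map c) (.ofList (List.ofFn t))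
  have hword : Injective word := fun s t hst =>
    List.ofFn_injective (FreeMonoid.ofList.injective (hc hst))
  have hle : Submodule.span K (Set.range fun t => MonoidAlgebra.of K _ (word t)) ≤
      spanV K n l H m := by
    rw [Submodule.span_le]
    rintro _ ⟨t, rfl⟩
    exact Submodule.subset_span ⟨(List.ofFn t).map c, by simp, by simp only [prod_map_xg]; rfl⟩
  calc Fintype.card ι ^ m = Fintype.card (Fin m → ι) := by simp
    _ = _ := (finrank_span_eq_card (MonoidAlgebra.linearIndependent_of_injective hword)).symm
    _ ≤ _ := Submodule.finrank_mono hle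

theorem exponential_growth_of_nontransitive_general (n l : ℕ) (H : Subgroup (Equiv.Perm (Fin n)))
    (hnt : ¬ ∀ i j : Fin n, ∃ σ ∈ H, σ i = j)
    (K : Type) [Field K] :
    (∃ f : FreeAlgebra K (Fin 2) →ₐ[K] MonoidAlgebra K (SM n l H), Function.Injective f) ∧
    ∀ m : ℕ, 2 ^ m ≤ Module.finrank K (spanV K n l H m) := by
  push Not at hnt
  obtain ⟨i, j, hij⟩ := hnt
  have horbits : Quotient.mk (orbitRel H (Fin n)) i ≠ Quotient.mk _ j := fun h => by
    obtain ⟨σ, hσ⟩ := orbitRel_apply.mp (Quotient.exact h.symm)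
    exact hij σ σ.2 hσ
  have hinj : Injective ((permCon n l H).mk'.comp (FreeMonoid.map ![i, j])) := by
    refine injective_mk'_comp_map fun a b hab => ?_
    fin_cases a <;> fin_cases b <;> simp_all [eq_comm]
  exact ⟨exists_injective_algHom_freeAlgebra_of_injective hinj,
    by simpa using card_pow_le_finrank_spanV K hinj⟩

theorem exponential_growth_of_nontransitive (n l : ℕ) (hl : 2 ≤ l) (H : Subgroup (Equiv.Perm (Fin n)))
    (hnt : ¬ ∀ i j : Fin n, ∃ σ ∈ H, σ i = j)
    (K : Type) [Field K] :
    (∃ f : FreeAlgebra K (Fin 2) →ₐ[K] MonoidAlgebra K (SM n l H), Function.Injective f) ∧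
    ∀ m : ℕ, 2 ^ m ≤ Module.finrank K (spanV K n l H m) :=
  exponential_growth_of_nontransitive_general n l H hnt K
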